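/- arXiv:2309.05572 — 2 statements merged into one kernel-verified Lean document; each statement's English description precedes it below -/
import Mathlib

section
/- Let W² be a nonnegative random variable with PDF f(t) = ((2b₀m)/(2b₀m+Ω))^m · (1/(2b₀)) · exp(−t/(2b₀)) · Σ_{n=0}^∞ ((m)_n/((1)_n n!)) · (Ω t/(2b₀(2b₀m+Ω)))^n for t ≥ 0, where m, b₀, Ω > 0 and (·)_n is the Pochhammer symbol. Then its moment generating function (Laplace transform evaluated at −σ) satisfies M(σ) = (2b₀m)^m (1+2b₀σ)^{m−1} / [(2b₀m+Ω)(1+2b₀σ) − Ω]^m for σ ≥ 0. -/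
/-!
Write the density times `exp (-σ t)` as `C · exp (-s t) · Σ (m)_n / (n!)² · (k t)ⁿ` with
`s = (1 + 2b₀σ) / (2b₀)` and `k = Ω / (2b₀(2b₀m + Ω))`. Since `0 ≤ σ` forces `|k| < s`, the
series may be integrated term by term; `∫₀^∞ tⁿ e^{-st} dt = n! / s^{n+1}` cancels one factorial
and leaves the binomial series `s⁻¹ Σ (m)_n / n! · (k/s)ⁿ = s⁻¹ (1 - k/s)^{-m}`.
-/

open Real Set MeasureTheory

namespace Real

theorem hasSum_ascPochhammer_eval_mul_pow_div_factorial (a : ℝ) {y : ℝ} (hy : |y| < 1) :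
    HasSum (fun n : ℕ => (ascPochhammer ℝ n).eval a * y ^ n / n.factorial) ((1 - y) ^ (-a)) := by
  have h := (one_div_one_sub_rpow_hasFPowerSeriesOnBall_zero a).hasSum
    (y := y) (by simpa [enorm_eq_nnnorm, ← NNReal.coe_lt_coe] using hy)
  have hchoose (n : ℕ) : Ring.choose (a + n - 1) n = (ascPochhammer ℝ n).eval a / n.factorial := by
    rw [← Ring.multichoose_eq, eq_div_iff (by positivity), mul_comm, ← nsmul_eq_mul,
      Ring.factorial_nsmul_multichoose_eq_ascPochhammer, Polynomial.ascPochhammer_smeval_eq_eval]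
  rw [rpow_neg (by linarith [le_abs_self y]), ← one_div]
  simpa only [FormalMultilinearSeries.ofScalars_apply_eq, hchoose, smul_eq_mul, zero_add,
    div_mul_eq_mul_div] using h

theorem integrableOn_pow_mul_exp_neg_mul_Ioi (n : ℕ) {s : ℝ} (hs : 0 < s) :
    IntegrableOn (fun t : ℝ => t ^ n * exp (-(s * t))) (Ioi 0) := by
  simpa [rpow_one, ← rpow_natCast] using
    integrableOn_rpow_mul_exp_neg_mul_rpow (p := 1) (s := n)
      (by linarith [n.cast_nonneg (α := ℝ)]) one_pos hs

theorem integral_pow_mul_exp_neg_mul_Ioi (n : ℕ) {s : ℝ} (hs : 0 < s) :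
    ∫ t in Ioi (0 : ℝ), t ^ n * exp (-(s * t)) = n.factorial / s ^ (n + 1) := by
  have h := integral_rpow_mul_exp_neg_mul_Ioi (a := n + 1) (by positivity) hs
  rw [add_sub_cancel_right, Gamma_nat_eq_factorial, ← Nat.cast_succ, rpow_natCast] at h
  simpa [rpow_natCast, div_eq_inv_mul] using h

theorem integral_exp_neg_mul_mul_tsum_pow {c : ℕ → ℝ} {s : ℝ} (hs : 0 < s)
    (hc : Summable fun n => |c n| * n.factorial / s ^ (n + 1)) :
    ∫ t in Ioi (0 : ℝ), exp (-(s * t)) * ∑' n, c n * t ^ n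
      = ∑' n, c n * n.factorial / s ^ (n + 1) := by
  have hint (n : ℕ) : IntegrableOn (fun t : ℝ => c n * (t ^ n * exp (-(s * t)))) (Ioi 0) :=
    (integrableOn_pow_mul_exp_neg_mul_Ioi n hs).const_mul _
  have hnorm (n : ℕ) : ∫ t in Ioi (0 : ℝ), ‖c n * (t ^ n * exp (-(s * t)))‖
      = |c n| * n.factorial / s ^ (n + 1) := by
    rw [mul_div_assoc, ← integral_pow_mul_exp_neg_mul_Ioi n hs, ← integral_const_mul]
    refine setIntegral_congr_fun measurableSet_Ioi fun t (ht : 0 < t) => ?_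
    rw [norm_mul, norm_eq_abs, norm_of_nonneg (by positivity)]
  calc ∫ t in Ioi (0 : ℝ), exp (-(s * t)) * ∑' n, c n * t ^ n
      = ∫ t in Ioi (0 : ℝ), ∑' n, c n * (t ^ n * exp (-(s * t))) := by
        congr 1 with t
        rw [← tsum_mul_left]
        congr 1 with n
        ring
    _ = ∑' n, ∫ t in Ioi (0 : ℝ), c n * (t ^ n * exp (-(s * t))) :=
        (integral_tsum_of_summable_integral_norm hint (by simpa only [hnorm] using hc)).symm
    _ = ∑' n, c n * n.factorial / s ^ (n + 1) := by
        simp only [integral_const_mul, integral_pow_mul_exp_neg_mul_Ioi _ hs, mul_div_assoc]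

theorem integral_exp_neg_mul_mul_tsum_ascPochhammer {a s k : ℝ} (ha : 0 < a) (hs : 0 < s)
    (hk : |k| < s) :
    ∫ t in Ioi (0 : ℝ), exp (-(s * t)) *
        ∑' n : ℕ, (ascPochhammer ℝ n).eval a / (n.factorial * n.factorial) * (k * t) ^ n
      = s ^ (a - 1) / (s - k) ^ a := by
  have hks : |k / s| < 1 := by rwa [abs_div, abs_of_pos hs, div_lt_one hs]
  have hterm (x : ℝ) (n : ℕ) :
      (ascPochhammer ℝ n).eval a / (n.factorial * n.factorial) * x ^ n * n.factorial / s ^ (n + 1)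
        = s⁻¹ * ((ascPochhammer ℝ n).eval a * (x / s) ^ n / n.factorial) := by
    rw [div_pow, pow_succ]
    field_simp
  have hsummable : Summable fun n : ℕ => |(ascPochhammer ℝ n).eval a
      / (n.factorial * n.factorial) * k ^ n| * n.factorial / s ^ (n + 1) := by
    have habs : |(|k| / s)| < 1 := by rwa [abs_div, abs_abs, abs_of_pos hs, div_lt_one hs]
    refine ((hasSum_ascPochhammer_eval_mul_pow_div_factorial a habs).summable.mul_left s⁻¹).congr
      fun n => ?_
    rw [abs_mul, abs_pow, abs_of_nonneg (div_nonneg (ascPochhammer_pos n a ha).le (by positivity))]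
    exact (hterm |k| n).symm
  simp_rw [mul_pow, ← mul_assoc]
  rw [integral_exp_neg_mul_mul_tsum_pow hs hsummable]
  simp_rw [hterm]
  rw [tsum_mul_left, (hasSum_ascPochhammer_eval_mul_pow_div_factorial a hks).tsum_eq]
  have hsk : 0 < s - k := by linarith [le_abs_self k]
  rw [one_sub_div hs.ne', rpow_neg (by positivity), div_rpow hsk.le hs.le, rpow_sub_one hs.ne']
  field_simp

end Real

/-- The shadowed-Rician power density has moment generating function (Laplace transform)
`M(σ) = (2b₀m)^m (1+2b₀σ)^{m−1} / [(2b₀m+Ω)(1+2b₀σ) − Ω]^m` for `σ ≥ 0`. -/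
theorem stmt7 (m b0 Om : ℝ) (hm : 0 < m) (hb0 : 0 < b0) (hOm : 0 < Om)
    (σ : ℝ) (hσ : 0 ≤ σ) :
    (∫ t in Ioi (0:ℝ),
        Real.exp (-σ * t) *
          ((2 * b0 * m / (2 * b0 * m + Om)) ^ m * (1 / (2 * b0))
            * Real.exp (-t / (2 * b0))
            * ∑' (n : ℕ),
                ((ascPochhammer ℝ n).eval m / ((Nat.factorial n : ℝ) * (Nat.factorial n : ℝ)))
                  * (Om * t / (2 * b0 * (2 * b0 * m + Om))) ^ n))
      = (2 * b0 * m) ^ m * (1 + 2 * b0 * σ) ^ (m - 1)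
          / ((2 * b0 * m + Om) * (1 + 2 * b0 * σ) - Om) ^ m := by
  set Q := 2 * b0 * m + Om
  set u := 1 + 2 * b0 * σ
  have hQ : 0 < Q := by positivity
  have hu : 0 < u := by positivity
  have hQu : Om < Q * u := calc
    Om < Q := by simp only [Q]; linarith [mul_pos (mul_pos two_pos hb0) hm]
    _ ≤ Q * u := le_mul_of_one_le_right hQ.le (by simp only [u]; linarith [mul_nonneg hb0.le hσ])
  have hk : |Om / (2 * b0 * Q)| < u / (2 * b0) := by
    rw [abs_of_pos (by positivity), div_lt_div_iff₀ (by positivity) (by positivity)]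
    nlinarith
  have hintegrand (t : ℝ) :
      exp (-σ * t) * ((2 * b0 * m / Q) ^ m * (1 / (2 * b0)) * exp (-t / (2 * b0))
        * ∑' n : ℕ, (ascPochhammer ℝ n).eval m / (n.factorial * n.factorial)
          * (Om * t / (2 * b0 * Q)) ^ n)
      = (2 * b0 * m / Q) ^ m * (1 / (2 * b0)) * (exp (-(u / (2 * b0) * t))
        * ∑' n : ℕ, (ascPochhammer ℝ n).eval m / (n.factorial * n.factorial)
          * (Om / (2 * b0 * Q) * t) ^ n) := by
    have hexp : exp (-σ * t) * exp (-t / (2 * b0)) = exp (-(u / (2 * b0) * t)) := by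
      rw [← exp_add]; congr 1; field_simp; ring
    simp only [mul_div_right_comm Om t]
    rw [← hexp]; ring
  simp only [hintegrand, integral_const_mul,
    integral_exp_neg_mul_mul_tsum_ascPochhammer hm (by positivity) hk]
  have hb : 0 < 2 * b0 := by positivity
  rw [show u / (2 * b0) - Om / (2 * b0 * Q) = (Q * u - Om) / (2 * b0 * Q) by field_simp,
    div_rpow (by positivity) hQ.le, div_rpow hu.le hb.le, div_rpow (by linarith) (by positivity),
    mul_rpow hb.le hQ.le, rpow_sub_one hb.ne']
  field_simp
end

section
/- For m, b₀, Ω > 0, the function f(t) = ((2b₀m)/(2b₀m+Ω))^m · (1/(2b₀)) · e^{−t/(2b₀)} · Σ_{n=0}^∞ ((m)_n/(n!)²) · (Ω t/(2b₀(2b₀m+Ω)))^n is a probability density on [0, ∞), i.e., f(t) ≥ 0 and ∫₀^∞ f(t) dt = 1. -/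
/-!
Write the series as `∑ aₙ (x t)ⁿ / n!` with `aₙ = (m)ₙ / n!`. Integrating termwise against
`e^{-t/β}` with `∫₀^∞ tⁿ e^{-t/β} dt = n! β^{n+1}` (the terms are absolutely integrable, so the
sum and the integral commute) turns `∫ f` into the binomial series
`∑ (m)ₙ / n! · (Ω / (2b₀m + Ω))ⁿ = (1 - Ω / (2b₀m + Ω))^{-m}`, which is exactly the inverse of the
normalising constant `(2b₀m / (2b₀m + Ω))^m`.
-/

open Real Set MeasureTheory
open scoped Nat

theorem Real.hasSum_ascPochhammer_div_factorial_mul_pow (a : ℝ) {x : ℝ} (hx : |x| < 1) :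
    HasSum (fun n : ℕ => (ascPochhammer ℝ n).eval a / n ! * x ^ n) (1 / (1 - x) ^ a) := by
  have hchoose (n : ℕ) : Ring.choose (a + n - 1) n = (ascPochhammer ℝ n).eval a / n ! := by
    rw [← Ring.multichoose_eq, eq_div_iff (by positivity), mul_comm, ← nsmul_eq_mul,
      Ring.factorial_nsmul_multichoose_eq_ascPochhammer, Polynomial.ascPochhammer_smeval_cast,
      Polynomial.ascPochhammer_smeval_eq_eval]
  have := (one_div_one_sub_rpow_hasFPowerSeriesOnBall_zero a).hasSum (y := x)
    (by simpa [enorm_eq_nnnorm, ← NNReal.coe_lt_coe] using hx)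
  simpa [FormalMultilinearSeries.ofScalars, hchoose] using this

section Laplace

variable {β : ℝ}

theorem integrableOn_pow_mul_exp_neg_div_Ioi (n : ℕ) (hβ : 0 < β) :
    IntegrableOn (fun t : ℝ => t ^ n * exp (-t / β)) (Ioi 0) := by
  have := integrableOn_rpow_mul_exp_neg_mul_rpow (s := n) (p := 1) (b := β⁻¹)
    (by linarith [n.cast_nonneg (α := ℝ)]) one_pos (inv_pos.2 hβ)
  refine this.congr_fun (fun t _ => ?_) measurableSet_Ioi
  simp only [rpow_one, rpow_natCast, div_eq_inv_mul, neg_mul, mul_neg]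

theorem integral_pow_mul_exp_neg_div_Ioi (n : ℕ) (hβ : 0 < β) :
    ∫ t in Ioi (0 : ℝ), t ^ n * exp (-t / β) = n ! * β ^ (n + 1) := by
  calc ∫ t in Ioi (0 : ℝ), t ^ n * exp (-t / β)
      = ∫ t in Ioi (0 : ℝ), t ^ ((n + 1 : ℝ) - 1) * exp (-(β⁻¹ * t)) := by
        refine setIntegral_congr_fun measurableSet_Ioi (fun t _ => ?_)
        simp only [add_sub_cancel_right, rpow_natCast, div_eq_inv_mul, mul_neg]
    _ = (1 / β⁻¹) ^ (n + 1 : ℝ) * Gamma (n + 1) :=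
        integral_rpow_mul_exp_neg_mul_Ioi (by positivity) (inv_pos.2 hβ)
    _ = n ! * β ^ (n + 1) := by
        rw [Gamma_nat_eq_factorial, one_div, inv_inv, ← Nat.cast_succ, rpow_natCast, mul_comm]

theorem integral_exp_neg_div_mul_tsum_div_factorial {a : ℕ → ℝ} {x : ℝ} (hβ : 0 < β)
    (ha : Summable fun n => ‖a n * (x * β) ^ n‖) :
    ∫ t in Ioi (0 : ℝ), exp (-t / β) * ∑' n, a n / n ! * (x * t) ^ n
      = β * ∑' n, a n * (x * β) ^ n := by
  set F : ℕ → ℝ → ℝ := fun n t => exp (-t / β) * (a n / n ! * (x * t) ^ n)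
  have hF (n : ℕ) : F n = fun t => a n / n ! * x ^ n * (t ^ n * exp (-t / β)) := by
    ext t; simp only [F, mul_pow]; ring
  have hFint (n : ℕ) : IntegrableOn (F n) (Ioi 0) := by
    rw [hF]; exact (integrableOn_pow_mul_exp_neg_div_Ioi n hβ).const_mul _
  have hFval (n : ℕ) : ∫ t in Ioi (0 : ℝ), F n t = β * (a n * (x * β) ^ n) := by
    simp only [hF, integral_const_mul, integral_pow_mul_exp_neg_div_Ioi n hβ]
    field_simp
    ring
  have hFnorm (n : ℕ) : ∫ t in Ioi (0 : ℝ), ‖F n t‖ = β * ‖a n * (x * β) ^ n‖ := by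
    have : EqOn (fun t => ‖F n t‖) (fun t => ‖a n / n ! * x ^ n‖ * (t ^ n * exp (-t / β)))
        (Ioi 0) := fun t (ht : 0 < t) => by
      simp only [hF]
      rw [norm_mul, Real.norm_of_nonneg (r := t ^ n * _) (by positivity)]
    rw [setIntegral_congr_fun measurableSet_Ioi this, integral_const_mul,
      integral_pow_mul_exp_neg_div_Ioi n hβ]
    simp only [norm_mul, norm_div, norm_pow, Real.norm_natCast, Real.norm_of_nonneg hβ.le]
    field_simp
    ring
  calc ∫ t in Ioi (0 : ℝ), exp (-t / β) * ∑' n, a n / n ! * (x * t) ^ n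
      = ∫ t in Ioi (0 : ℝ), ∑' n, F n t := by simp only [F, tsum_mul_left]
    _ = ∑' n, ∫ t in Ioi (0 : ℝ), F n t := by
      refine (integral_tsum_of_summable_integral_norm hFint ?_).symm
      simpa only [hFnorm] using ha.mul_left β
    _ = β * ∑' n, a n * (x * β) ^ n := by simp only [hFval, tsum_mul_left]

end Laplace

/-- The shadowed-Rician power density
`f(t) = ((2b₀m)/(2b₀m+Ω))^m (1/(2b₀)) e^{−t/(2b₀)} Σₙ ((m)ₙ/(n!)²)(Ωt/(2b₀(2b₀m+Ω)))ⁿ`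
is a probability density on `[0, ∞)`. -/
theorem stmt9 (m b0 Om : ℝ) (hm : 0 < m) (hb0 : 0 < b0) (hOm : 0 < Om) :
    (∀ t : ℝ, 0 ≤ t →
      0 ≤ (2 * b0 * m / (2 * b0 * m + Om)) ^ m * (1 / (2 * b0))
            * Real.exp (-t / (2 * b0))
            * ∑' (n : ℕ),
                ((ascPochhammer ℝ n).eval m / ((Nat.factorial n : ℝ)) ^ 2)
                  * (Om * t / (2 * b0 * (2 * b0 * m + Om))) ^ n) ∧
    (∫ t in Ioi (0:ℝ),
        (2 * b0 * m / (2 * b0 * m + Om)) ^ m * (1 / (2 * b0))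
          * Real.exp (-t / (2 * b0))
          * ∑' (n : ℕ),
              ((ascPochhammer ℝ n).eval m / ((Nat.factorial n : ℝ)) ^ 2)
                * (Om * t / (2 * b0 * (2 * b0 * m + Om))) ^ n) = 1 := by
  set K := 2 * b0 * m + Om
  have hK : 0 < K := by positivity
  refine ⟨fun t ht => mul_nonneg (by positivity) (tsum_nonneg fun n => ?_), ?_⟩
  · have := ascPochhammer_pos n m hm
    positivity
  have hseries (t : ℝ) :
      ∑' n : ℕ, (ascPochhammer ℝ n).eval m / (n ! : ℝ) ^ 2 * (Om * t / (2 * b0 * K)) ^ n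
        = ∑' n : ℕ, (ascPochhammer ℝ n).eval m / n ! / n ! * (Om / (2 * b0 * K) * t) ^ n :=
    tsum_congr fun n => by rw [sq, div_div, mul_div_right_comm]
  have hxβ : Om / (2 * b0 * K) * (2 * b0) = Om / K := by field_simp
  have hratio : |Om / K| < 1 := by
    rw [abs_of_pos (by positivity), div_lt_one hK]
    linarith [show 0 < 2 * b0 * m by positivity]
  have hbinom := Real.hasSum_ascPochhammer_div_factorial_mul_pow m hratio
  have hlaplace := integral_exp_neg_div_mul_tsum_div_factorial
    (a := fun n => (ascPochhammer ℝ n).eval m / n !) (x := Om / (2 * b0 * K)) (β := 2 * b0)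
    (by positivity) (by simpa only [hxβ, Real.norm_eq_abs] using hbinom.summable.abs)
  simp only [hxβ, hbinom.tsum_eq, ← hseries] at hlaplace
  have hbase : 1 - Om / K = 2 * b0 * m / K := by field_simp; ring
  simp only [mul_assoc _ (rexp _), integral_const_mul, hlaplace, hbase]
  field_simp
end
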